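/- arXiv:2206.15364 — 5 statements merged into one kernel-verified Lean document; each statement's English description precedes it below -/
import Mathlib

section
/- Let M be a metric space with a point o ∈ M. Let γ : ℝ → M be 1-Lipschitz with γ(0) = o and γ(S) = o for some S ≥ 0, and suppose there are times 0 ≤ s ≤ u ≤ S with γ(s) = a and γ(u) = b. If a point q ∈ M satisfies dist(a, q) + dist(q, b) = dist(a, b) (i.e., q lies on a geodesic segment between a and b), then dist(o, q) ≤ S / 2. (Honest form of the paper's Lemma stating that a server operated by the Redesign/PAH algorithm, which always travels on geodesic segments between the origin and request positions along a closed route of length at most Z^OPT, satisfies d(p(t), o) ≤ ½ Z^OPT at all times.) -/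
/-- A unit-speed server that travels along a closed route of length `S` starting and
ending at the origin, and that at some moment lies on a geodesic segment between two
points `a` and `b` visited (in this order) along the route, is at distance at most `S / 2`
from the origin. -/
theorem dist_origin_le_half {M : Type*} [MetricSpace M] (o : M) (γ : ℝ → M)
    (hγ : LipschitzWith 1 γ) (S : ℝ) (hS : 0 ≤ S) (hγ0 : γ 0 = o) (hγS : γ S = o)
    (s u : ℝ) (hs : 0 ≤ s) (hsu : s ≤ u) (huS : u ≤ S)
    (a b q : M) (ha : γ s = a) (hb : γ u = b)
    (hq : dist a q + dist q b = dist a b) :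
    dist o q ≤ S / 2 := by
  have h1 : dist o a ≤ s := by
    have := hγ.dist_le_mul 0 s
    simpa [hγ0, ha, abs_of_nonneg hs, Real.dist_eq] using this
  have h2 : dist b o ≤ S - u := by
    have := hγ.dist_le_mul u S
    simpa [hγS, hb, abs_of_nonneg (sub_nonneg.2 huS), Real.dist_eq, dist_comm] using this
  have h3 : dist a b ≤ u - s := by
    have := hγ.dist_le_mul s u
    rw [Real.dist_eq, abs_of_nonpos (by linarith)] at this
    simpa [ha, hb] using this
  have t1 : dist o q ≤ dist o a + dist a q := dist_triangle _ _ _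
  have t2 : dist o q ≤ dist q b + dist b o := by
    calc dist o q = dist q o := dist_comm _ _
    _ ≤ dist q b + dist b o := dist_triangle _ _ _
  linarith
end

section
/- Assume M is geodesic and let x = ((t_1,p_1),…,(t_n,p_n)) and x̂ = ((t̂_1,p̂_1),…,(t̂_n,p̂_n)) be request sequences of the same length n. For every feasible pair (σ, T) for x there exists a feasible pair (σ', T') for x̂ with T' ≤ T + ε_time + 2·ε_pos; consequently Z(x̂) ≤ Z(x) + ε_time + 2·ε_pos. (Paper's Lemma: Z'_{x̂} ≤ Z*_{x̂} ≤ Z^OPT + ε_time + 2 ε_pos, proved by delaying the route by ε_time and inserting a detour of length 2·dist(p_i, p̂_i) at each request.) -/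
/-- A schedule of a unit-speed server: a 1-Lipschitz map that stays at the origin `o`
at all times `≤ 0`. -/
def IsSchedule {M : Type*} [MetricSpace M] (o : M) (σ : ℝ → M) : Prop :=
  LipschitzWith 1 σ ∧ ∀ s : ℝ, s ≤ 0 → σ s = o

/-- Feasibility of a pair `(σ, T)` for the request sequence `x`: the schedule ends at the
origin at time `T` and visits each request position no earlier than its release time. -/
def Feasible {M : Type*} [MetricSpace M] (o : M) {n : ℕ} (x : Fin n → ℝ × M)
    (σ : ℝ → M) (T : ℝ) : Prop :=
  IsSchedule o σ ∧ 0 ≤ T ∧ σ T = o ∧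
    ∀ i : Fin n, ∃ s : ℝ, (x i).1 ≤ s ∧ s ≤ T ∧ σ s = (x i).2

/-- The optimal offline completion time of the request sequence `x`. -/
noncomputable def Z {M : Type*} [MetricSpace M] (o : M) {n : ℕ} (x : Fin n → ℝ × M) : ℝ :=
  sInf {T : ℝ | ∃ σ : ℝ → M, Feasible o x σ T}

/-- The optimal length of a closed tour through the request positions of `x`,
ignoring release times. -/
noncomputable def L {M : Type*} [MetricSpace M] (o : M) {n : ℕ} (x : Fin n → ℝ × M) : ℝ :=
  sInf {S : ℝ | 0 ≤ S ∧ ∃ γ : ℝ → M, LipschitzWith 1 γ ∧ γ 0 = o ∧ γ S = o ∧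
    ∀ i : Fin n, ∃ s : ℝ, 0 ≤ s ∧ s ≤ S ∧ γ s = (x i).2}

/-- `M` is geodesic: any two points are joined by a unit-speed geodesic. -/
def IsGeodesicSpace (M : Type*) [MetricSpace M] : Prop :=
  ∀ a b : M, ∃ γ : ℝ → M, LipschitzWith 1 γ ∧ γ 0 = a ∧ γ (dist a b) = b

/-!
Delay a feasible route for `x` by `ε_time`: it then serves every position `pᵢ` no earlier than
the predicted release time `t̂ᵢ`. Each predicted position `p̂ᵢ` is then served by pausing
the route where it visits `pᵢ` and inserting a round trip along a geodesic from `pᵢ` to `p̂ᵢ`,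
which costs `2 · dist(pᵢ, p̂ᵢ)`. Since a geodesic space is path-connected, the same detours
applied to the route that waits at `o` until every request is released show that `x` has a
feasible route at all, so the bound on routes passes to the infima.
-/

open Function

theorem LipschitzWith.ite_le {α : Type*} [PseudoMetricSpace α] {K : NNReal} {f g : ℝ → α}
    (hf : LipschitzWith K f) (hg : LipschitzWith K g) {a : ℝ} (h : f a = g a) :
    LipschitzWith K fun u => if u ≤ a then f u else g u := by
  have cross : ∀ u v, u ≤ a → a ≤ v → dist (f u) (g v) ≤ K * dist u v := by
    intro u v hu hv
    calc dist (f u) (g v) ≤ dist (f u) (f a) + dist (g a) (g v) := h ▸ dist_triangle _ _ _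
      _ ≤ K * dist u a + K * dist a v := add_le_add (hf.dist_le_mul _ _) (hg.dist_le_mul _ _)
      _ = K * dist u v := by
        rw [Real.dist_eq, Real.dist_eq, Real.dist_eq, abs_of_nonpos (by linarith),
          abs_of_nonpos (by linarith), abs_of_nonpos (by linarith)]
        ring
  refine LipschitzWith.of_dist_le_mul fun u v => ?_
  rcases le_or_gt u a with hu | hu <;> rcases le_or_gt v a with hv | hv <;>
    simp only [hu, hv, if_true, if_false, not_le.2]
  · exact hf.dist_le_mul u v
  · exact cross u v hu hv.le
  · rw [dist_comm, dist_comm u]; exact cross v u hv hu.le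
  · exact hg.dist_le_mul u v

section insertLoop

variable {α : Type*}

/-- The route `σ` with the loop `ℓ : [0, D] → α` inserted at time `s`. -/
noncomputable def insertLoop (σ : ℝ → α) (s D : ℝ) (ℓ : ℝ → α) : ℝ → α :=
  fun u => if u ≤ s then σ u else if u ≤ s + D then ℓ (u - s) else σ (u - D)

variable {σ ℓ : ℝ → α} {s D u : ℝ}

theorem insertLoop_of_le (hu : u ≤ s) : insertLoop σ s D ℓ u = σ u := if_pos hu

theorem insertLoop_of_mem (hℓ0 : ℓ 0 = σ s) (hsu : s ≤ u) (huD : u ≤ s + D) :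
    insertLoop σ s D ℓ u = ℓ (u - s) := by
  rcases hsu.eq_or_lt with rfl | hsu
  · rw [insertLoop_of_le le_rfl, sub_self, hℓ0]
  · exact (if_neg hsu.not_ge).trans (if_pos huD)

theorem insertLoop_of_ge (hℓD : ℓ D = σ s) (hD : 0 ≤ D) (hu : s + D ≤ u) :
    insertLoop σ s D ℓ u = σ (u - D) := by
  rcases hu.eq_or_lt with rfl | hu
  · rcases hD.eq_or_lt with rfl | hD
    · simp [insertLoop]
    · simp [insertLoop, hD, hℓD]
  · exact (if_neg (by linarith)).trans (if_neg hu.not_ge)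

theorem LipschitzWith.insertLoop [PseudoMetricSpace α] {K : NNReal} (hσ : LipschitzWith K σ)
    (hℓ : LipschitzWith K ℓ) (hℓ0 : ℓ 0 = σ s) (hℓD : ℓ D = σ s) (hD : 0 ≤ D) :
    LipschitzWith K (insertLoop σ s D ℓ) := by
  have shift (c : ℝ) : LipschitzWith 1 fun u : ℝ => u - c :=
    (IsometryEquiv.subRight c).isometry.lipschitz
  refine hσ.ite_le (LipschitzWith.ite_le ?_ ?_ ?_) ?_
  · exact (hℓ.comp (shift s)).weaken (mul_one _).le
  · exact (hσ.comp (shift D)).weaken (mul_one _).le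
  · simp [hℓD]
  · simp [hℓ0, hD]

end insertLoop

section Schedules

variable {M : Type*} [MetricSpace M] {o : M} {n : ℕ}

theorem Feasible.exists_visit_nonneg {x : Fin n → ℝ × M} {σ : ℝ → M} {T : ℝ}
    (h : Feasible o x σ T) (i : Fin n) :
    ∃ s, (x i).1 ≤ s ∧ 0 ≤ s ∧ s ≤ T ∧ σ s = (x i).2 := by
  obtain ⟨⟨-, hσ0⟩, hT, -, hvisit⟩ := h
  obtain ⟨s, hts, hsT, hs⟩ := hvisit i
  refine ⟨max s 0, le_max_of_le_left hts, le_max_right _ _, max_le hsT hT, ?_⟩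
  rcases le_total s 0 with hs0 | hs0
  · rw [max_eq_right hs0, hσ0 0 le_rfl, ← hσ0 s hs0, hs]
  · rwa [max_eq_left hs0]

theorem Feasible.delay {x y : Fin n → ℝ × M} {σ : ℝ → M} {T δ : ℝ} (h : Feasible o x σ T)
    (hδ : 0 ≤ δ) (hfst : ∀ i, (y i).1 ≤ (x i).1 + δ) (hsnd : ∀ i, (y i).2 = (x i).2) :
    Feasible o y (fun u => σ (u - δ)) (T + δ) := by
  obtain ⟨⟨hσ, hσ0⟩, hT, hσT, hvisit⟩ := h
  refine ⟨⟨?_, fun u hu => hσ0 _ (by linarith)⟩, by linarith, by simpa using hσT, fun i => ?_⟩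
  · exact (hσ.comp (IsometryEquiv.subRight δ).isometry.lipschitz).weaken (mul_one _).le
  · obtain ⟨s, hts, hsT, hs⟩ := hvisit i
    exact ⟨s + δ, by linarith [hfst i], by linarith, by simpa [hsnd i] using hs⟩

theorem Feasible.insertLoop {y : Fin n → ℝ × M} {σ ℓ : ℝ → M} {T s D : ℝ}
    (h : Feasible o y σ T) (hs : 0 ≤ s) (hsT : s ≤ T) (hD : 0 ≤ D)
    (hℓ : LipschitzWith 1 ℓ) (hℓ0 : ℓ 0 = σ s) (hℓD : ℓ D = σ s)
    (i : Fin n) {t v : ℝ} (hv : 0 ≤ v) (hvD : v ≤ D) (ht : t ≤ s + v) :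
    Feasible o (update y i (t, ℓ v)) (insertLoop σ s D ℓ) (T + D) := by
  obtain ⟨⟨hσ, hσ0⟩, hT, hσT, hvisit⟩ := h
  refine ⟨⟨hσ.insertLoop hℓ hℓ0 hℓD hD, fun u hu => ?_⟩, by linarith, ?_, fun j => ?_⟩
  · rw [insertLoop_of_le (hu.trans hs), hσ0 u hu]
  · rw [insertLoop_of_ge hℓD hD (by linarith), add_sub_cancel_right, hσT]
  rcases eq_or_ne j i with rfl | hji
  · refine ⟨s + v, by simpa using ht, by linarith, ?_⟩
    rw [update_self, insertLoop_of_mem hℓ0 (by linarith) (by linarith), add_sub_cancel_left]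
  rw [update_of_ne hji]
  obtain ⟨r, htr, hrT, hr⟩ := hvisit j
  rcases le_or_gt r s with hrs | hsr
  · exact ⟨r, htr, by linarith, by rw [insertLoop_of_le hrs, hr]⟩
  · refine ⟨r + D, by linarith, by linarith, ?_⟩
    rw [insertLoop_of_ge hℓD hD (by linarith), add_sub_cancel_right, hr]

theorem Feasible.exists_update_snd (hgeo : IsGeodesicSpace M) {y : Fin n → ℝ × M}
    {σ : ℝ → M} {T : ℝ} (h : Feasible o y σ T) (i : Fin n) (q : M) :
    ∃ σ' T', Feasible o (update y i ((y i).1, q)) σ' T' ∧ T' ≤ T + 2 * dist q (y i).2 := by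
  obtain ⟨s, hts, hs, hsT, hσs⟩ := h.exists_visit_nonneg i
  obtain ⟨γ, hγ, hγ0, hγq⟩ := hgeo (y i).2 q
  set d := dist (y i).2 q
  have hd : 0 ≤ d := dist_nonneg
  -- out along `γ` during `[0, d]`, back along it during `[d, 2d]`
  set ℓ : ℝ → M := fun v => γ (min v (2 * d - v))
  have hℓ : LipschitzWith 1 ℓ := (hγ.comp (LipschitzWith.id.min
    (IsometryEquiv.subLeft (2 * d)).isometry.lipschitz)).weaken (by simp)
  have hℓ0 : ℓ 0 = σ s := by simp [ℓ, hd, hγ0, hσs]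
  have hℓD : ℓ (2 * d) = σ s := by simp [ℓ, hd, hγ0, hσs]
  have hℓd : ℓ d = q := by simp [ℓ, show 2 * d - d = d by ring, hγq]
  refine ⟨_, _, hℓd ▸ h.insertLoop hs hsT (by positivity) hℓ hℓ0 hℓD i hd (by linarith)
    (by linarith), by rw [dist_comm]⟩

theorem Feasible.exists_of_fst_eq (hgeo : IsGeodesicSpace M) {y : Fin n → ℝ × M}
    {σ : ℝ → M} {T : ℝ} (h : Feasible o y σ T) (y' : Fin n → ℝ × M)
    (hfst : ∀ i, (y' i).1 = (y i).1) :
    ∃ σ' T', Feasible o y' σ' T' ∧ T' ≤ T + 2 * ∑ i, dist (y' i).2 (y i).2 := by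
  suffices ∀ S : Finset (Fin n), ∀ y' : Fin n → ℝ × M, (∀ i, (y' i).1 = (y i).1) →
      (∀ i ∉ S, y' i = y i) →
      ∃ σ' T', Feasible o y' σ' T' ∧ T' ≤ T + 2 * ∑ i ∈ S, dist (y' i).2 (y i).2 from
    this Finset.univ y' hfst (by simp)
  intro S
  induction S using Finset.induction_on with
  | empty =>
    intro y' _ hout
    exact ⟨σ, T, funext (fun i => hout i (Finset.notMem_empty i)) ▸ h, by simp⟩
  | insert a S haS ih =>
    intro y' hfst hout
    have hout' : ∀ i ∉ S, update y' a (y a) i = y i := by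
      intro i hi
      rcases eq_or_ne i a with rfl | hia
      · exact update_self ..
      · rw [update_of_ne hia, hout i (by simp [hia, hi])]
    have hfst' : ∀ i, (update y' a (y a) i).1 = (y i).1 := by
      intro i
      rcases eq_or_ne i a with rfl | hia
      · rw [update_self]
      · rw [update_of_ne hia, hfst i]
    obtain ⟨σ₁, T₁, h₁, hT₁⟩ := ih (update y' a (y a)) hfst' hout'
    obtain ⟨σ₂, T₂, h₂, hT₂⟩ := h₁.exists_update_snd hgeo a (y' a).2
    have hy' : update (update y' a (y a)) a ((update y' a (y a) a).1, (y' a).2) = y' := by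
      rw [update_idem, update_self, ← hfst a, update_eq_self]
    have hsum : ∑ i ∈ S, dist (update y' a (y a) i).2 (y i).2 = ∑ i ∈ S, dist (y' i).2 (y i).2 :=
      Finset.sum_congr rfl fun i hi => by rw [update_of_ne (ne_of_mem_of_not_mem hi haS)]
    refine ⟨σ₂, T₂, hy' ▸ h₂, ?_⟩
    rw [Finset.sum_insert haS]
    simp only [update_self, hsum] at hT₁ hT₂
    linarith

theorem exists_feasible (hgeo : IsGeodesicSpace M) (o : M) (x : Fin n → ℝ × M) :
    ∃ σ T, Feasible o x σ T := by
  set T := ∑ i, |(x i).1|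
  have hwait : Feasible o (fun i => ((x i).1, o)) (fun _ => o) T := by
    refine ⟨⟨LipschitzWith.const' o, fun _ _ => rfl⟩, by positivity, rfl,
      fun i => ⟨T, ?_, le_rfl, rfl⟩⟩
    exact (le_abs_self _).trans (Finset.single_le_sum (fun j _ => abs_nonneg (x j).1)
      (Finset.mem_univ i))
  obtain ⟨σ, T', h, -⟩ := hwait.exists_of_fst_eq hgeo x fun _ => rfl
  exact ⟨σ, T', h⟩

theorem Z_le_add_of_forall_feasible {x y : Fin n → ℝ × M} {c : ℝ}
    (hx : ∃ σ T, Feasible o x σ T)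
    (h : ∀ σ T, Feasible o x σ T → ∃ σ' T', Feasible o y σ' T' ∧ T' ≤ T + c) :
    Z o y ≤ Z o x + c := by
  obtain ⟨σ₀, T₀, h₀⟩ := hx
  rw [← sub_le_iff_le_add]
  refine le_csInf ⟨T₀, σ₀, h₀⟩ ?_
  rintro T ⟨σ, hσ⟩
  obtain ⟨σ', T', h', hT'⟩ := h σ T hσ
  have : Z o y ≤ T' := csInf_le ⟨0, fun _ ⟨_, hf⟩ => hf.2.1⟩ ⟨σ', h'⟩
  linarith

end Schedules

theorem predicted_le_actual_general {M : Type*} [MetricSpace M] (o : M)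
    (hgeo : IsGeodesicSpace M) {n : ℕ}
    (x xh : Fin n → ℝ × M) :
    (∀ σ T, Feasible o x σ T →
      ∃ σ' T', Feasible o xh σ' T' ∧
        T' ≤ T + (⨆ i, |(xh i).1 - (x i).1|) + 2 * ∑ i, dist (xh i).2 (x i).2) ∧
    Z o xh ≤ Z o x + (⨆ i, |(xh i).1 - (x i).1|) + 2 * ∑ i, dist (xh i).2 (x i).2 := by
  set ε := ⨆ i, |(xh i).1 - (x i).1|
  have hε : ∀ i, (xh i).1 ≤ (x i).1 + ε := fun i => by
    have := (le_abs_self _).trans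
      (le_ciSup (f := fun j => |(xh j).1 - (x j).1|) (Set.finite_range _).bddAbove i)
    linarith
  have transfer : ∀ σ T, Feasible o x σ T →
      ∃ σ' T', Feasible o xh σ' T' ∧ T' ≤ T + ε + 2 * ∑ i, dist (xh i).2 (x i).2 := by
    intro σ T h
    have hdelay : Feasible o (fun i => ((xh i).1, (x i).2)) (fun u => σ (u - ε)) (T + ε) :=
      h.delay (Real.iSup_nonneg fun _ => abs_nonneg _) hε fun _ => rfl
    obtain ⟨σ', T', h', hT'⟩ := hdelay.exists_of_fst_eq hgeo xh fun _ => rfl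
    exact ⟨σ', T', h', by linarith⟩
  refine ⟨transfer, ?_⟩
  rw [add_assoc]
  exact Z_le_add_of_forall_feasible (exists_feasible hgeo o x) fun σ T h => by
    simpa only [add_assoc] using transfer σ T h

/-- From any feasible pair for the actual instance `x` one obtains a feasible pair for the
predicted instance `x̂` at an extra cost of `ε_time + 2 ε_pos`; consequently
`Z(x̂) ≤ Z(x) + ε_time + 2 ε_pos`. -/
theorem predicted_le_actual {M : Type*} [MetricSpace M] (o : M)
    (hgeo : IsGeodesicSpace M) {n : ℕ}
    (x xh : Fin n → ℝ × M) (hx : ∀ i, 0 ≤ (x i).1) (hxh : ∀ i, 0 ≤ (xh i).1) :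
    (∀ σ T, Feasible o x σ T →
      ∃ σ' T', Feasible o xh σ' T' ∧
        T' ≤ T + (⨆ i, |(xh i).1 - (x i).1|) + 2 * ∑ i, dist (xh i).2 (x i).2) ∧
    Z o xh ≤ Z o x + (⨆ i, |(xh i).1 - (x i).1|) + 2 * ∑ i, dist (xh i).2 (x i).2 :=
  predicted_le_actual_general o hgeo x xh
end

section
/- Assume M is geodesic and let x = ((t_1,p_1),…,(t_n,p_n)) and x̂ = ((t̂_1,p̂_1),…,(t̂_n,p̂_n)) be request sequences of the same length n. For every feasible pair (σ, T) for x̂ there exists a feasible pair (σ', T') for x with T' ≤ T + ε_time + 2·ε_pos; consequently Z(x) ≤ Z(x̂) + ε_time + 2·ε_pos. (Paper's Lemma: Z^ALG ≤ Z'_{x̂} + ε_time + 2 ε_pos, proved by delaying the predicted route by ε_time and inserting a detour of length 2·dist(p̂_i, p_i) at each predicted request.) -/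
lemma lip_glue {M : Type*} [MetricSpace M] {f g : ℝ → M}
    (hf : LipschitzWith 1 f) (hg : LipschitzWith 1 g) {a b : ℝ}
    (ha : f a = g a) (hb : f b = g b) :
    LipschitzWith 1 (fun u => if a ≤ u ∧ u ≤ b then g u else f u) := by
  set F : ℝ → M := fun u => if a ≤ u ∧ u ≤ b then g u else f u with hF
  apply LipschitzWith.of_dist_le_mul
  suffices key : ∀ u v : ℝ, u ≤ v → dist (F u) (F v) ≤ v - u by
    intro u v
    rcases le_total u v with h | h
    · calc dist (F u) (F v) ≤ v - u := key u v h
        _ ≤ _ := by rw [Real.dist_eq, abs_of_nonpos (by linarith)]; push_cast; linarith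
    · calc dist (F u) (F v) = dist (F v) (F u) := dist_comm _ _
        _ ≤ u - v := key v u h
        _ ≤ _ := by rw [Real.dist_eq, abs_of_nonneg (by linarith)]; push_cast; linarith
  intro u v huv
  have hfd : ∀ c d : ℝ, dist (f c) (f d) ≤ |c - d| := by
    intro c d; have := hf.dist_le_mul c d; simpa [Real.dist_eq] using this
  have hgd : ∀ c d : ℝ, dist (g c) (g d) ≤ |c - d| := by
    intro c d; have := hg.dist_le_mul c d; simpa [Real.dist_eq] using this
  by_cases cu : a ≤ u ∧ u ≤ b <;> by_cases cv : a ≤ v ∧ v ≤ b <;>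
      simp only [hF, cu, cv, if_true, if_false, and_self, if_pos, if_neg, not_false_iff]
  · calc dist (g u) (g v) ≤ |u - v| := hgd u v
      _ = v - u := by rw [abs_of_nonpos (by linarith)]; ring
  · -- u in, v out: b < v
    have hbv : b < v := by
      by_contra h; push_neg at h; exact cv ⟨le_trans cu.1 huv, h⟩
    calc dist (g u) (f v) ≤ dist (g u) (g b) + dist (g b) (f v) := dist_triangle _ _ _
      _ = dist (g u) (g b) + dist (f b) (f v) := by rw [hb]
      _ ≤ |u - b| + |b - v| := add_le_add (hgd u b) (hfd b v)
      _ = v - u := by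
          rw [abs_of_nonpos (by linarith [cu.2]), abs_of_nonpos (by linarith)]; ring
  · -- u out, v in: u < a
    have hua : u < a := by
      by_contra h; push_neg at h; exact cu ⟨h, le_trans huv cv.2⟩
    calc dist (f u) (g v) ≤ dist (f u) (f a) + dist (f a) (g v) := dist_triangle _ _ _
      _ = dist (f u) (f a) + dist (g a) (g v) := by rw [ha]
      _ ≤ |u - a| + |a - v| := add_le_add (hfd u a) (hgd a v)
      _ = v - u := by
          rw [abs_of_nonpos (by linarith), abs_of_nonpos (by linarith [cv.1])]; ring
  · calc dist (f u) (f v) ≤ |u - v| := hfd u v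
      _ = v - u := by rw [abs_of_nonpos (by linarith)]; ring

lemma detour {M : Type*} [MetricSpace M] (o : M) (hgeo : IsGeodesicSpace M) {n : ℕ}
    (y : Fin n → ℝ × M) (j : Fin n) (hj : 0 ≤ (y j).1) (q : M) {σ : ℝ → M} {T : ℝ}
    (h : Feasible o y σ T) :
    ∃ σ', Feasible o (Function.update y j ((y j).1, q)) σ' (T + 2 * dist (y j).2 q) := by
  obtain ⟨⟨hlip, hzero⟩, hT0, hTo, hvisit⟩ := h
  obtain ⟨s, hts, hsT, hσs⟩ := hvisit j
  set d := dist (y j).2 q with hd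
  have hd0 : 0 ≤ d := dist_nonneg
  obtain ⟨γ, hγlip, hγ0, hγd⟩ := hgeo (y j).2 q
  have hs0 : 0 ≤ s := le_trans hj hts
  set τ : ℝ → ℝ := fun u => min u (max s (u - 2*d)) with hτ
  have hτlip : LipschitzWith 1 τ := by
    have h1 : LipschitzWith 1 (fun u : ℝ => u - 2*d) := by
      apply LipschitzWith.of_dist_le_mul
      intro a b
      simp only [Real.dist_eq, NNReal.coe_one, one_mul]
      have : a - 2*d - (b - 2*d) = a - b := by ring
      rw [this]
    have h2 : LipschitzWith 1 (fun u : ℝ => max s (u - 2*d)) := by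
      have := ((LipschitzWith.const (α := ℝ) s).weaken (zero_le_one)).max h1
      simpa using this
    have h3 := (LipschitzWith.id (α := ℝ)).min h2
    rw [sup_idem] at h3
    exact h3
  set ρ : ℝ → ℝ := fun u => d - |u - s - d| with hρ
  have hρlip : LipschitzWith 1 ρ := by
    apply LipschitzWith.of_dist_le_mul
    intro a b
    simp only [Real.dist_eq, NNReal.coe_one, one_mul, hρ]
    have e1 : d - |a - s - d| - (d - |b - s - d|) = |b - s - d| - |a - s - d| := by ring
    rw [e1]
    refine le_trans (abs_abs_sub_abs_le_abs_sub _ _) ?_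
    rw [show b - s - d - (a - s - d) = -(a - b) by ring, abs_neg]
  set f : ℝ → M := fun u => σ (τ u) with hf
  set g : ℝ → M := fun u => γ (ρ u) with hg
  have hτ_le : ∀ u, u ≤ s → τ u = u := by
    intro u hu
    simp only [hτ]
    rw [max_eq_left (by linarith), min_eq_left hu]
  have hτ_mid : ∀ u, s ≤ u → u ≤ s + 2*d → τ u = s := by
    intro u h1 h2
    simp only [hτ]
    rw [max_eq_left (by linarith), min_eq_right h1]
  have hτ_ge : ∀ u, s + 2*d ≤ u → τ u = u - 2*d := by
    intro u hu
    simp only [hτ]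
    rw [max_eq_right (by linarith), min_eq_right (by linarith)]
  have hfs : f s = (y j).2 := by rw [hf]; simp only; rw [hτ_le s le_rfl, hσs]
  have hgs : g s = (y j).2 := by
    rw [hg]; simp only [hρ]
    rw [show s - s - d = -d by ring, abs_neg, abs_of_nonneg hd0,
      show d - d = (0:ℝ) by ring, hγ0]
  have hf2 : f (s + 2*d) = (y j).2 := by
    rw [hf]; simp only; rw [hτ_mid _ (by linarith) le_rfl, hσs]
  have hg2 : g (s + 2*d) = (y j).2 := by
    rw [hg]; simp only [hρ]
    rw [show s + 2*d - s - d = d by ring, abs_of_nonneg hd0,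
      show d - d = (0:ℝ) by ring, hγ0]
  set σ' : ℝ → M := fun u => if s ≤ u ∧ u ≤ s + 2*d then g u else f u with hσ'
  have hflip : LipschitzWith 1 f := by
    have h' := hlip.comp hτlip; rw [one_mul] at h'; exact h'
  have hglip : LipschitzWith 1 g := by
    have h' := hγlip.comp hρlip; rw [one_mul] at h'; exact h'
  have hσ'lip : LipschitzWith 1 σ' :=
    lip_glue hflip hglip (hfs.trans hgs.symm) (hf2.trans hg2.symm)
  refine ⟨σ', ⟨hσ'lip, ?_⟩, by linarith, ?_, ?_⟩
  · -- stays at origin for u ≤ 0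
    intro u hu
    by_cases c : s ≤ u ∧ u ≤ s + 2*d
    · have hus : u = s := le_antisymm (le_trans hu hs0) c.1
      simp only [hσ']
      rw [hus, if_pos (⟨le_rfl, by linarith⟩ : s ≤ s ∧ s ≤ s + 2*d), hgs, ← hσs]
      exact hzero s (by linarith [hus])
    · simp only [hσ', if_neg c, hf]
      exact hzero _ (le_trans (min_le_left _ _) hu)
  · -- back at origin at T + 2d
    by_cases c : s ≤ T + 2*d ∧ T + 2*d ≤ s + 2*d
    · have hTs : s = T := le_antisymm hsT (by linarith [c.2])
      simp only [hσ']
      rw [if_pos c, ← hTs, hg2, ← hσs, hTs]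
      exact hTo
    · simp only [hσ', if_neg c, hf]
      rw [hτ_ge _ (by linarith), show T + 2*d - 2*d = T by ring]
      exact hTo
  · intro i
    by_cases hij : i = j
    · subst hij
      refine ⟨s + d, ?_, by linarith, ?_⟩
      · simp only [Function.update_self]
        linarith
      · have c : s ≤ s + d ∧ s + d ≤ s + 2*d := ⟨by linarith, by linarith⟩
        simp only [hσ', if_pos c, hg, hρ, Function.update_self]
        rw [show s + d - s - d = (0:ℝ) by ring, abs_zero, sub_zero, hγd]
    · obtain ⟨si, h1, h2, h3⟩ := hvisit i
      rw [Function.update_of_ne hij]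
      by_cases hsi : si ≤ s
      · refine ⟨si, h1, by linarith, ?_⟩
        by_cases c : s ≤ si ∧ si ≤ s + 2*d
        · have hss : si = s := le_antisymm hsi c.1
          simp only [hσ']
          rw [hss, if_pos (⟨le_rfl, by linarith⟩ : s ≤ s ∧ s ≤ s + 2*d), hgs, ← hσs, ← hss]
          exact h3
        · simp only [hσ', if_neg c, hf]
          rw [hτ_le _ hsi]; exact h3
      · push_neg at hsi
        refine ⟨si + 2*d, by linarith, by linarith, ?_⟩
        have c : ¬ (s ≤ si + 2*d ∧ si + 2*d ≤ s + 2*d) := by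
          rintro ⟨-, c2⟩; linarith
        simp only [hσ', if_neg c, hf]
        rw [hτ_ge _ (by linarith), show si + 2*d - 2*d = si by ring]
        exact h3

lemma reposition {M : Type*} [MetricSpace M] (o : M) (hgeo : IsGeodesicSpace M) {n : ℕ}
    (t : Fin n → ℝ) (ht : ∀ i, 0 ≤ t i) (p q : Fin n → M) {σ : ℝ → M} {T : ℝ}
    (h : Feasible o (fun i => (t i, p i)) σ T) :
    ∃ σ' T', Feasible o (fun i => (t i, q i)) σ' T' ∧
      T' ≤ T + 2 * ∑ i, dist (p i) (q i) := by
  suffices key : ∀ k : ℕ, k ≤ n → ∃ σ' T',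
      Feasible o (fun i => (t i, if (i : ℕ) < k then q i else p i)) σ' T' ∧
      T' ≤ T + 2 * ∑ i : Fin n, (if (i : ℕ) < k then dist (p i) (q i) else 0) by
    obtain ⟨σ', T', hfeas, hle⟩ := key n le_rfl
    refine ⟨σ', T', ?_, ?_⟩
    · have he : (fun i : Fin n => (t i, if (i : ℕ) < n then q i else p i))
          = fun i => (t i, q i) := by
        funext i; simp [i.isLt]
      rwa [he] at hfeas
    · have he : ∑ i : Fin n, (if (i : ℕ) < n then dist (p i) (q i) else 0)
          = ∑ i : Fin n, dist (p i) (q i) :=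
        Finset.sum_congr rfl fun i _ => by simp [i.isLt]
      rwa [he] at hle
  intro k
  induction k with
  | zero =>
    intro _
    exact ⟨σ, T, by simpa using h, by simp⟩
  | succ k ih =>
    intro hk
    obtain ⟨σ', T', hfeas, hle⟩ := ih (Nat.le_of_succ_le hk)
    set j : Fin n := ⟨k, hk⟩ with hj
    obtain ⟨σ'', hfeas''⟩ := detour o hgeo _ j (ht j) (q j) hfeas
    have hcond : ¬ ((j : ℕ) < k) := by simp [hj]
    simp only [if_neg hcond] at hfeas''
    refine ⟨σ'', T' + 2 * dist (p j) (q j), ?_, ?_⟩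
    · convert hfeas'' using 1
      funext i
      by_cases hij : i = j
      · subst hij
        rw [Function.update_self]
        simp [hj]
      · rw [Function.update_of_ne hij]
        have hvk : (i : ℕ) ≠ k := fun e => hij (Fin.ext (by simp [hj, e]))
        have : ((i : ℕ) < k + 1) ↔ ((i : ℕ) < k) := by omega
        simp only [this]
    · have hsum : ∑ i : Fin n, (if (i : ℕ) < k + 1 then dist (p i) (q i) else 0)
          = ∑ i : Fin n, (if (i : ℕ) < k then dist (p i) (q i) else 0)
            + dist (p j) (q j) := by
        have hterm : ∀ i : Fin n, (if (i : ℕ) < k + 1 then dist (p i) (q i) else 0)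
            = (if (i : ℕ) < k then dist (p i) (q i) else 0)
              + (if i = j then dist (p i) (q i) else 0) := by
          intro i
          by_cases h1 : (i : ℕ) < k
          · have h2 : i ≠ j := fun e => by
              rw [e] at h1; simp [hj] at h1
            simp [h1, h2, Nat.lt_succ_of_lt h1]
          · by_cases h2 : i = j
            · subst h2; simp [hj]
            · have h3 : (i : ℕ) ≠ k := fun e => h2 (Fin.ext (by simp [hj, e]))
              have h4 : ¬ (i : ℕ) < k + 1 := by omega
              simp [h1, h2, h4]
        rw [Finset.sum_congr rfl fun i _ => hterm i, Finset.sum_add_distrib,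
          Finset.sum_ite_eq' Finset.univ j, if_pos (Finset.mem_univ j)]
      rw [hsum]
      linarith

/-- From any feasible pair for the predicted instance `x̂` one obtains a feasible pair for
the actual instance `x` at an extra cost of `ε_time + 2 ε_pos`; consequently
`Z(x) ≤ Z(x̂) + ε_time + 2 ε_pos`. -/
theorem actual_le_predicted {M : Type*} [MetricSpace M] (o : M)
    (hgeo : IsGeodesicSpace M) {n : ℕ}
    (x xh : Fin n → ℝ × M) (hx : ∀ i, 0 ≤ (x i).1) (hxh : ∀ i, 0 ≤ (xh i).1) :
    (∀ σ T, Feasible o xh σ T →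
      ∃ σ' T', Feasible o x σ' T' ∧
        T' ≤ T + (⨆ i, |(xh i).1 - (x i).1|) + 2 * ∑ i, dist (xh i).2 (x i).2) ∧
    Z o x ≤ Z o xh + (⨆ i, |(xh i).1 - (x i).1|) + 2 * ∑ i, dist (xh i).2 (x i).2 := by
  set e := ⨆ i, |(xh i).1 - (x i).1| with he
  set P := ∑ i, dist (xh i).2 (x i).2 with hP
  have hP0 : 0 ≤ P := Finset.sum_nonneg fun i _ => dist_nonneg
  have he0 : 0 ≤ e := by
    rcases Nat.eq_zero_or_pos n with h0 | hpos
    · subst h0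
      rw [he, Real.iSup_of_isEmpty]
    · rw [he]
      refine le_trans (abs_nonneg ((xh ⟨0, hpos⟩).1 - (x ⟨0, hpos⟩).1)) ?_
      exact le_ciSup (f := fun i : Fin n => |(xh i).1 - (x i).1|)
        (Set.Finite.bddAbove (Set.finite_range _)) ⟨0, hpos⟩
  have hte : ∀ i, (x i).1 ≤ (xh i).1 + e := by
    intro i
    have h1 : |(xh i).1 - (x i).1| ≤ e := by
      rw [he]
      exact le_ciSup (f := fun i : Fin n => |(xh i).1 - (x i).1|)
        (Set.Finite.bddAbove (Set.finite_range _)) i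
    have h2 := neg_abs_le ((xh i).1 - (x i).1)
    linarith
  have main : ∀ σ T, Feasible o xh σ T →
      ∃ σ' T', Feasible o x σ' T' ∧ T' ≤ T + e + 2 * P := by
    intro σ T hf
    obtain ⟨⟨hlip, hzero⟩, hT0, hTo, hvis⟩ := hf
    set σ₁ : ℝ → M := fun u => σ (u - e) with hσ₁
    have hσ₁lip : LipschitzWith 1 σ₁ := by
      have hsub : LipschitzWith 1 (fun u : ℝ => u - e) := by
        apply LipschitzWith.of_dist_le_mul
        intro a b
        simp only [Real.dist_eq, NNReal.coe_one, one_mul]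
        rw [show a - e - (b - e) = a - b by ring]
      have h' := hlip.comp hsub
      rw [one_mul] at h'
      exact h'
    have hfeas1 : Feasible o (fun i => ((x i).1, (xh i).2)) σ₁ (T + e) := by
      refine ⟨⟨hσ₁lip, fun u hu => hzero _ (by linarith)⟩, by linarith, ?_, ?_⟩
      · simp only [hσ₁]
        rw [show T + e - e = T by ring]
        exact hTo
      · intro i
        obtain ⟨s, h1, h2, h3⟩ := hvis i
        refine ⟨s + e, ?_, by linarith, ?_⟩
        · have := hte i
          simp only
          linarith
        · simp only [hσ₁]
          rw [show s + e - e = s by ring]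
          exact h3
    obtain ⟨σ', T', hfeas, hle⟩ :=
      reposition o hgeo (fun i => (x i).1) hx (fun i => (xh i).2) (fun i => (x i).2) hfeas1
    have hxe : (fun i : Fin n => ((x i).1, (x i).2)) = x := funext fun i => Prod.mk.eta
    rw [hxe] at hfeas
    exact ⟨σ', T', hfeas, by rw [hP]; linarith⟩
  refine ⟨main, ?_⟩
  -- nonemptiness of the predicted feasible set
  have hne : {T : ℝ | ∃ σ : ℝ → M, Feasible o xh σ T}.Nonempty := by
    set T₀ := ∑ i, (xh i).1 with hT₀def
    have hT₀ : 0 ≤ T₀ := Finset.sum_nonneg fun i _ => hxh i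
    have hbase : Feasible o (fun i => ((xh i).1, o)) (fun _ => o) T₀ := by
      refine ⟨⟨(LipschitzWith.const o).weaken zero_le_one, fun _ _ => rfl⟩, hT₀, rfl,
        fun i => ⟨(xh i).1, le_refl _, ?_, rfl⟩⟩
      exact Finset.single_le_sum (fun i _ => hxh i) (Finset.mem_univ i)
    obtain ⟨σ', T', hfeas, _⟩ :=
      reposition o hgeo (fun i => (xh i).1) hxh (fun _ => o) (fun i => (xh i).2) hbase
    have hxe : (fun i : Fin n => ((xh i).1, (xh i).2)) = xh := funext fun i => Prod.mk.eta
    rw [hxe] at hfeas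
    exact ⟨T', σ', hfeas⟩
  have hbdd : BddBelow {T : ℝ | ∃ σ : ℝ → M, Feasible o x σ T} := by
    refine ⟨0, fun T hT => ?_⟩
    obtain ⟨σ, hσ⟩ := hT
    exact hσ.2.1
  have hkey : ∀ T ∈ {T : ℝ | ∃ σ : ℝ → M, Feasible o xh σ T}, Z o x - (e + 2 * P) ≤ T := by
    intro T hT
    obtain ⟨σ, hσ⟩ := hT
    obtain ⟨σ', T', hfeas, hle⟩ := main σ T hσ
    have h1 : Z o x ≤ T' := csInf_le hbdd ⟨σ', hfeas⟩
    linarith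
  have h2 : Z o x - (e + 2 * P) ≤ Z o xh := le_csInf hne hkey
  linarith
end

section
/- Assume M is geodesic and let x = ((t_1,p_1),…,(t_n,p_n)) be a nonempty request sequence with t_max := max_i t_i. Then for every point q ∈ M with dist(o, q) ≤ t_max, one has t_max + dist(o, q) + L(x) ≤ 3·Z(x). (The 3-robustness bound in the paper's Theorem on the LAR-ID algorithm: if the server is at position q when the last request arrives at time t_n, then returning home and following an optimal tour finishes by time t_n + d(p(t_n), o) + |T_{U_{t_n}}| ≤ 3 Z^OPT.) -/


lemma bump_lip (c d : ℝ) : LipschitzWith 1 (fun s : ℝ => max 0 (d - |s - c|)) := by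
  rw [lipschitzWith_iff_dist_le_mul]
  intro a b
  rw [Real.dist_eq, Real.dist_eq]
  push_cast
  rw [one_mul]
  calc |max 0 (d - |a - c|) - max 0 (d - |b - c|)|
      = |max (d - |a - c|) 0 - max (d - |b - c|) 0| := by rw [max_comm, max_comm (d - |b-c|)]
    _ ≤ |(d - |a - c|) - (d - |b - c|)| := abs_max_sub_max_le_abs _ _ _
    _ = |(|b - c|) - (|a - c|)| := by ring_nf
    _ ≤ |(b - c) - (a - c)| := abs_abs_sub_abs_le_abs_sub _ _
    _ = |a - b| := by rw [abs_sub_comm]; ring_nf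

lemma lipschitz_glue {M : Type*} [MetricSpace M] (T : ℝ) (f g : ℝ → M)
    (hf : LipschitzWith 1 f) (hg : LipschitzWith 1 g) (hfg : f T = g T) :
    LipschitzWith 1 (fun s => if s ≤ T then f s else g s) := by
  rw [lipschitzWith_iff_dist_le_mul]
  have key : ∀ a b : ℝ, a ≤ b →
      dist (if a ≤ T then f a else g a) (if b ≤ T then f b else g b) ≤ 1 * dist a b := by
    intro a b hab
    by_cases ha : a ≤ T <;> by_cases hb : b ≤ T <;> simp only [ha, hb, if_true, if_false]
    · simpa using hf.dist_le_mul a b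
    · push_neg at hb
      calc dist (f a) (g b) ≤ dist (f a) (f T) + dist (g T) (g b) := by
            rw [hfg]; exact dist_triangle _ _ _
        _ ≤ 1 * dist a T + 1 * dist T b := add_le_add (hf.dist_le_mul a T) (hg.dist_le_mul T b)
        _ ≤ 1 * dist a b := by
            rw [Real.dist_eq, Real.dist_eq, Real.dist_eq,
              abs_of_nonpos (by linarith), abs_of_nonpos (by linarith),
              abs_of_nonpos (by linarith)]
            linarith
    · exact absurd (le_trans hab hb) ha
    · simpa using hg.dist_le_mul a b
  intro a b
  rcases le_total a b with h | h
  · exact key a b h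
  · rw [dist_comm, dist_comm a b]; exact key b a h

/-- Existence of a schedule visiting all points after time `t₀`, flat at `o` after some `T ≥ t₀`. -/
lemma exists_tour {M : Type*} [MetricSpace M] (o : M)
    (hgeo : ∀ a b : M, ∃ γ : ℝ → M, LipschitzWith 1 γ ∧ γ 0 = a ∧ γ (dist a b) = b) :
    ∀ (n : ℕ) (x : Fin n → ℝ × M) (t₀ : ℝ), 0 ≤ t₀ →
      ∃ (σ : ℝ → M) (T : ℝ), LipschitzWith 1 σ ∧ (∀ s, s ≤ 0 → σ s = o) ∧ t₀ ≤ T ∧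
        (∀ s, T ≤ s → σ s = o) ∧ ∀ i, ∃ s, t₀ ≤ s ∧ s ≤ T ∧ σ s = (x i).2 := by
  intro n
  induction n with
  | zero =>
    intro x t₀ ht₀
    exact ⟨fun _ => o, t₀, (LipschitzWith.const o).weaken (by norm_num),
      fun _ _ => rfl, le_refl _, fun _ _ => rfl, fun i => i.elim0⟩
  | succ n ih =>
    intro x t₀ ht₀
    obtain ⟨σ, T, hlip, hneg, hT, hflat, hvisit⟩ := ih (x ∘ Fin.castSucc) t₀ ht₀
    set p := (x (Fin.last n)).2 with hp
    set d := dist o p with hd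
    have hd0 : 0 ≤ d := dist_nonneg
    obtain ⟨γ, hγlip, hγ0, hγd⟩ := hgeo o p
    set h : ℝ → ℝ := fun s => max 0 (d - |s - (T + d)|) with hh
    have hhlip : LipschitzWith 1 h := bump_lip (T + d) d
    have hhT : h T = 0 := by
      simp only [hh]
      rw [abs_of_nonpos (by linarith)]
      simp
    have hhmid : h (T + d) = d := by
      simp only [hh]
      rw [show T + d - (T + d) = 0 by ring, abs_zero, sub_zero, max_eq_right hd0]
    set σ' : ℝ → M := fun s => if s ≤ T then σ s else γ (h s) with hσ'
    have hσ'lip : LipschitzWith 1 σ' := by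
      refine lipschitz_glue T σ (γ ∘ h) hlip (by simpa using hγlip.comp hhlip) ?_
      simp [hflat T le_rfl, Function.comp, hhT, hγ0]
    refine ⟨σ', T + 2 * d, hσ'lip, ?_, by linarith, ?_, ?_⟩
    · intro s hs
      have : s ≤ T := le_trans hs (le_trans ht₀ hT)
      simp only [hσ', this, if_true]
      exact hneg s hs
    · intro s hs
      by_cases hsT : s ≤ T
      · have : d ≤ 0 := by linarith
        have hd' : d = 0 := le_antisymm this hd0
        simp only [hσ', hsT, if_true]
        exact hflat s (by linarith)
      · simp only [hσ', hsT, if_false, hh]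
        have : |s - (T + d)| = s - (T + d) := abs_of_nonneg (by linarith)
        rw [this, max_eq_left (by linarith), hγ0]
    · intro i
      refine Fin.lastCases ?_ ?_ i
      · refine ⟨T + d, by linarith, by linarith, ?_⟩
        by_cases hsT : T + d ≤ T
        · have hd' : d = 0 := le_antisymm (by linarith) hd0
          have hpo : p = o := (dist_eq_zero.mp (hd ▸ hd' : dist o p = 0)).symm
          simp only [hσ', hsT, if_true]
          rw [hflat (T + d) (by linarith), ← hp, hpo]
        · simp only [hσ', hsT, if_false, hhmid]
          exact hγd
      · intro j
        obtain ⟨s, hs1, hs2, hs3⟩ := hvisit j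
        exact ⟨s, hs1, by linarith, by simp only [hσ', hs2, if_true]; exact hs3⟩

/-- The 3-robustness bound: if the server is at a position `q` with `dist(o, q) ≤ t_max`
when the last request arrives, then returning home and following an optimal tour finishes
by time `t_max + dist(o, q) + L(x) ≤ 3 · Z(x)`. -/
theorem three_robust_bound {M : Type*} [MetricSpace M] (o : M)
    (hgeo : IsGeodesicSpace M) {n : ℕ} (hn : 0 < n)
    (x : Fin n → ℝ × M) (hx : ∀ i, 0 ≤ (x i).1)
    (q : M) (hq : dist o q ≤ ⨆ i, (x i).1) :
    (⨆ i, (x i).1) + dist o q + L o x ≤ 3 * Z o x := by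
  have hne : Nonempty (Fin n) := ⟨⟨0, hn⟩⟩
  set tmax : ℝ := ⨆ i, (x i).1 with htmax
  have hbdd : BddAbove (Set.range fun i => (x i).1) := Set.Finite.bddAbove (Set.finite_range _)
  have hle_tmax : ∀ i, (x i).1 ≤ tmax := fun i => le_ciSup hbdd i
  have htmax0 : 0 ≤ tmax := le_trans (hx ⟨0, hn⟩) (hle_tmax ⟨0, hn⟩)
  -- Z set nonempty
  obtain ⟨σ₀, T₀, hl₀, hn₀, hT₀, hfl₀, hv₀⟩ := exists_tour o hgeo n x tmax htmax0
  have hT₀0 : 0 ≤ T₀ := le_trans htmax0 hT₀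
  have hZne : ∃ T, T ∈ {T : ℝ | ∃ σ : ℝ → M, Feasible o x σ T} :=
    ⟨T₀, σ₀, ⟨hl₀, hn₀⟩, hT₀0, hfl₀ T₀ le_rfl,
      fun i => (hv₀ i).imp fun s ⟨h1, h2, h3⟩ => ⟨le_trans (hle_tmax i) h1, h2, h3⟩⟩
  -- every feasible T ≥ tmax
  have hkey : ∀ T ∈ {T : ℝ | ∃ σ : ℝ → M, Feasible o x σ T}, tmax ≤ T := by
    rintro T ⟨σ, _, _, _, hv⟩
    refine ciSup_le fun i => ?_
    obtain ⟨s, h1, h2, _⟩ := hv i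
    linarith
  have hZbdd : BddBelow {T : ℝ | ∃ σ : ℝ → M, Feasible o x σ T} := ⟨tmax, hkey⟩
  have htmaxZ : tmax ≤ Z o x := le_csInf hZne hkey
  -- L ≤ Z
  have hLZ : L o x ≤ Z o x := by
    refine le_csInf hZne ?_
    rintro T ⟨σ, ⟨hlip, hneg⟩, hT0, hTo, hv⟩
    refine csInf_le ⟨0, fun S hS => hS.1⟩ ?_
    exact ⟨hT0, σ, hlip, hneg 0 le_rfl, hTo,
      fun i => (hv i).imp fun s ⟨h1, h2, h3⟩ => ⟨le_trans (hx i) h1, h2, h3⟩⟩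
  linarith [le_trans hq htmaxZ]
end

section
/- (Paper's Theorem: with sequence prediction without identity, any 1-consistent algorithm has robustness at least 1/δ.) Fix δ ∈ (0,1). Let x̂ := ((δ, δ), (1, 1)) and x' := ((δ, δ)) be request sequences on the real line. Then Z(x̂) = 2 and Z(x') = 2δ, and for every causal online algorithm ALG: if T_{x̂} ≤ 2 (i.e., ALG achieves the optimal completion time when the actual input coincides with the prediction x̂), then T_{x'} ≥ 2, so T_{x'} ≥ (1/δ)·Z(x'). Hence every 1-consistent algorithm has competitive ratio at least 1/δ on the input x'. -/
/-- Feasibility on the real line (origin `0`): the schedule is 1-Lipschitz, stays at `0`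
at all times `≤ 0`, is at `0` at the completion time `T`, and visits each request position
no earlier than its release time. -/
def FeasibleL (x : List (ℝ × ℝ)) (σ : ℝ → ℝ) (T : ℝ) : Prop :=
  (LipschitzWith 1 σ ∧ ∀ s : ℝ, s ≤ 0 → σ s = 0) ∧ 0 ≤ T ∧ σ T = 0 ∧
    ∀ r ∈ x, ∃ s : ℝ, r.1 ≤ s ∧ s ≤ T ∧ σ s = r.2

/-- The optimal offline completion time of a request sequence on the real line. -/
noncomputable def ZL (x : List (ℝ × ℝ)) : ℝ :=
  sInf {T : ℝ | ∃ σ : ℝ → ℝ, FeasibleL x σ T}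

/-- A causal online algorithm on the real line: it assigns to every request sequence a
feasible pair (schedule, completion time), and whenever two request sequences contain
exactly the same requests with release time `≤ τ` (as multisets), the two schedules agree
at all times `≤ τ`. -/
structure OnlineAlg where
  sched : List (ℝ × ℝ) → ℝ → ℝ
  time : List (ℝ × ℝ) → ℝ
  feasible : ∀ x, FeasibleL x (sched x) (time x)
  causal : ∀ (τ : ℝ) (x y : List (ℝ × ℝ)),
    (x.filter fun r => decide (r.1 ≤ τ)).Perm (y.filter fun r => decide (r.1 ≤ τ)) →
    ∀ s ≤ τ, sched x s = sched y s

lemma lipAbs {σ : ℝ → ℝ} (h : LipschitzWith 1 σ) (a b : ℝ) : |σ a - σ b| ≤ |a - b| := by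
  have := h.dist_le_mul a b
  simpa [Real.dist_eq] using this

lemma lipTent (c : ℝ) : LipschitzWith 1 (fun s : ℝ => max 0 (min s (c - s))) := by
  apply LipschitzWith.of_dist_le_mul
  intro a b
  simp only [Real.dist_eq, NNReal.coe_one, one_mul]
  calc |max 0 (min a (c - a)) - max 0 (min b (c - b))|
      = |max (min a (c - a)) 0 - max (min b (c - b)) 0| := by rw [max_comm 0, max_comm 0]
    _ ≤ |min a (c - a) - min b (c - b)| := abs_max_sub_max_le_abs _ _ _
    _ ≤ max |a - b| |(c - a) - (c - b)| := abs_min_sub_min_le_max _ _ _ _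
    _ ≤ |a - b| := by
        apply max_le le_rfl
        rw [show (c - a) - (c - b) = -(a - b) by ring, abs_neg]

/-- With a sequence prediction without identity, any 1-consistent algorithm has
robustness at least `1/δ`: on the prediction `x̂ = ((δ,δ),(1,1))` the optimum is `2`, on
the actual input `x' = ((δ,δ))` the optimum is `2δ`, and any causal online algorithm that
finishes `x̂` by time `2` needs time at least `2 = (1/δ) · Z(x')` on `x'`. -/
theorem one_consistent_not_robust_without_identity (δ : ℝ) (hδ0 : 0 < δ) (hδ1 : δ < 1)
    (A : OnlineAlg) :
    ZL [(δ, δ), (1, 1)] = 2 ∧ ZL [(δ, δ)] = 2 * δ ∧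
      (A.time [(δ, δ), (1, 1)] ≤ 2 →
        2 ≤ A.time [(δ, δ)] ∧ (1 / δ) * ZL [(δ, δ)] ≤ A.time [(δ, δ)]) := by
    -- membership witnesses
  have mem1 : (2 : ℝ) ∈ {T : ℝ | ∃ σ : ℝ → ℝ, FeasibleL [(δ, δ), (1, 1)] σ T} := by
    refine ⟨fun s => max 0 (min s (2 - s)), ⟨lipTent 2, fun s hs => ?_⟩, by norm_num, ?_, ?_⟩
    · have : min s (2 - s) ≤ 0 := le_trans (min_le_left _ _) hs
      simp [max_eq_left this]
    · show max 0 (min 2 (2 - 2)) = 0; norm_num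
    · rintro r hr
      simp only [List.mem_cons, List.mem_singleton, List.not_mem_nil, or_false] at hr
      rcases hr with hr | hr
      · subst hr
        refine ⟨δ, le_rfl, by linarith, ?_⟩
        show max 0 (min δ (2 - δ)) = δ
        rw [min_eq_left (by linarith), max_eq_right hδ0.le]
      · subst hr
        refine ⟨1, le_rfl, by norm_num, ?_⟩
        show max 0 (min 1 (2 - 1)) = 1
        norm_num
  have mem2 : (2 * δ : ℝ) ∈ {T : ℝ | ∃ σ : ℝ → ℝ, FeasibleL [(δ, δ)] σ T} := by
    refine ⟨fun s => max 0 (min s (2 * δ - s)), ⟨lipTent _, fun s hs => ?_⟩, by linarith, ?_, ?_⟩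
    · have : min s (2 * δ - s) ≤ 0 := le_trans (min_le_left _ _) hs
      simp [max_eq_left this]
    · show max 0 (min (2 * δ) (2 * δ - 2 * δ)) = 0
      rw [sub_self, min_eq_right (by linarith)]; simp
    · rintro r hr
      simp only [List.mem_singleton] at hr
      subst hr
      refine ⟨δ, le_rfl, by linarith, ?_⟩
      show max 0 (min δ (2 * δ - δ)) = δ
      rw [min_eq_left (by linarith), max_eq_right hδ0.le]
  -- lower bounds
  have lb1 : ∀ T ∈ {T : ℝ | ∃ σ : ℝ → ℝ, FeasibleL [(δ, δ), (1, 1)] σ T}, (2 : ℝ) ≤ T := by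
    rintro T ⟨σ, ⟨hlip, -⟩, -, hT0, hreq⟩
    obtain ⟨s, hs1, hsT, hσs⟩ := hreq (1, 1) (by simp)
    have hs1' : (1 : ℝ) ≤ s := hs1
    have hσs' : σ s = 1 := hσs
    have hd := lipAbs hlip s T
    rw [hσs', hT0] at hd
    have habs : |s - T| = T - s := by rw [abs_sub_comm, abs_of_nonneg (by linarith)]
    rw [habs] at hd
    have : (1 : ℝ) ≤ T - s := le_trans (by norm_num) (le_trans (le_abs_self _) hd)
    linarith
  have lb2 : ∀ T ∈ {T : ℝ | ∃ σ : ℝ → ℝ, FeasibleL [(δ, δ)] σ T}, (2 * δ : ℝ) ≤ T := by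
    rintro T ⟨σ, ⟨hlip, -⟩, -, hT0, hreq⟩
    obtain ⟨s, hs1, hsT, hσs⟩ := hreq (δ, δ) (by simp)
    have hs1' : δ ≤ s := hs1
    have hσs' : σ s = δ := hσs
    have hd := lipAbs hlip s T
    rw [hσs', hT0] at hd
    have habs : |s - T| = T - s := by rw [abs_sub_comm, abs_of_nonneg (by linarith)]
    rw [habs] at hd
    have : δ ≤ T - s := le_trans (le_abs_self _) (by simpa using hd)
    linarith
  have hZ1 : ZL [(δ, δ), (1, 1)] = 2 :=
    le_antisymm (csInf_le ⟨2, lb1⟩ mem1) (le_csInf ⟨2, mem1⟩ lb1)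
  have hZ2 : ZL [(δ, δ)] = 2 * δ :=
    le_antisymm (csInf_le ⟨2 * δ, lb2⟩ mem2) (le_csInf ⟨2 * δ, mem2⟩ lb2)
  refine ⟨hZ1, hZ2, fun hcons => ?_⟩
  obtain ⟨⟨hliph, -⟩, -, hTh0, hreqh⟩ := A.feasible [(δ, δ), (1, 1)]
  obtain ⟨⟨hlip', -⟩, -, hT'0, hreq'⟩ := A.feasible [(δ, δ)]
  -- the schedule on the predicted input is at 1 at time 1
  obtain ⟨s₁, hs11, hs1T, hσs1⟩ := hreqh (1, 1) (by simp)
  have hs11' : (1 : ℝ) ≤ s₁ := hs11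
  have hσs1' : A.sched [(δ, δ), (1, 1)] s₁ = 1 := hσs1
  have hd := lipAbs hliph s₁ (A.time [(δ, δ), (1, 1)])
  rw [hσs1', hTh0] at hd
  have habs : |s₁ - A.time [(δ, δ), (1, 1)]| = A.time [(δ, δ), (1, 1)] - s₁ := by
    rw [abs_sub_comm, abs_of_nonneg (by linarith)]
  rw [habs] at hd
  have h1Ts : (1 : ℝ) ≤ A.time [(δ, δ), (1, 1)] - s₁ :=
    le_trans (by norm_num) (le_trans (le_abs_self _) hd)
  have hs1eq : s₁ = 1 := le_antisymm (by linarith) hs11'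
  have hσh1 : A.sched [(δ, δ), (1, 1)] 1 = 1 := hs1eq ▸ hσs1'
  -- agreement of the two schedules before time 1
  have hagree : ∀ s : ℝ, s < 1 → A.sched [(δ, δ)] s = A.sched [(δ, δ), (1, 1)] s := by
    intro s hs
    apply A.causal s [(δ, δ)] [(δ, δ), (1, 1)]
    · have h1 : decide ((1 : ℝ) ≤ s) = false := by
        simp only [decide_eq_false_iff_not]; intro h; linarith
      simp only [List.filter, h1]
      exact List.Perm.refl _
    · exact le_rfl
  -- the predicted schedule is at least s for s ≤ 1
  have hge : ∀ s : ℝ, s ≤ 1 → s ≤ A.sched [(δ, δ), (1, 1)] s := by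
    intro s hs
    have hd2 := lipAbs hliph 1 s
    rw [hσh1] at hd2
    have h1 : 1 - A.sched [(δ, δ), (1, 1)] s ≤ |1 - A.sched [(δ, δ), (1, 1)] s| := le_abs_self _
    have h2 : |(1 : ℝ) - s| = 1 - s := abs_of_nonneg (by linarith)
    rw [h2] at hd2
    linarith
  -- the actual completion time is at least 1
  have hT'1 : (1 : ℝ) ≤ A.time [(δ, δ)] := by
    by_contra h
    push_neg at h
    obtain ⟨s, hsδ, hsT, -⟩ := hreq' (δ, δ) (by simp)
    have hsδ' : δ ≤ s := hsδ
    have hT'pos : δ ≤ A.time [(δ, δ)] := le_trans hsδ' hsT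
    have hle : A.time [(δ, δ)] ≤ A.sched [(δ, δ)] (A.time [(δ, δ)]) :=
      (hagree (A.time [(δ, δ)]) h) ▸ (hge (A.time [(δ, δ)]) h.le)
    rw [hT'0] at hle
    linarith
  -- the actual completion time is at least 2s for every s < 1
  have h2s : ∀ s : ℝ, 0 ≤ s → s < 1 → 2 * s ≤ A.time [(δ, δ)] := by
    intro s hs0 hs1
    have hσ's : s ≤ A.sched [(δ, δ)] s := (hagree s hs1) ▸ (hge s hs1.le)
    have hd3 := lipAbs hlip' s (A.time [(δ, δ)])
    rw [hT'0, sub_zero] at hd3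
    have habs2 : |s - A.time [(δ, δ)]| = A.time [(δ, δ)] - s := by
      rw [abs_sub_comm, abs_of_nonneg (by linarith)]
    rw [habs2] at hd3
    have : A.sched [(δ, δ)] s ≤ A.time [(δ, δ)] - s := le_trans (le_abs_self _) hd3
    linarith
  have hT'2 : (2 : ℝ) ≤ A.time [(δ, δ)] := by
    by_contra h
    push_neg at h
    have hhalf : A.time [(δ, δ)] / 2 < 1 := by linarith
    have hs0 : 0 ≤ (A.time [(δ, δ)] / 2 + 1) / 2 := by linarith
    have hs1 : (A.time [(δ, δ)] / 2 + 1) / 2 < 1 := by linarith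
    have := h2s _ hs0 hs1
    linarith
  refine ⟨hT'2, ?_⟩
  rw [hZ2]
  have heq : (1 / δ) * (2 * δ) = 2 := by field_simp
  rw [heq]
  exact hT'2
end
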